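/- arXiv:2312.15996 — 2 statements merged into one kernel-verified Lean document; each statement's English description precedes it below -/
import Mathlib

section
/- Let c > 0, γ > 0, and let u : [0,T) → ℝ be differentiable with u(0) ≥ γ/√(1+γ²) and u'(t) ≥ c·u(t)·(1 - u(t)²) whenever 0 < u(t) ≤ 1. Assume 0 < u(t) ≤ 1 for all t. Then u(t) ≥ γ·e^{ct}/√(1 + γ²·e^{2ct}) for all t ∈ [0,T). -/
/-!
For a positive solution of `u' ≥ c u (1 - u²)` the quantity `e^{2cs} (u⁻² - 1)` is
nonincreasing, being a first integral of the equation `u' = c u (1 - u²)`. Since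
`x / √(1 + x²) ≤ a` is equivalent to `x² (a⁻² - 1) ≤ 1`, with `x = γ e^{cs}` the hypothesis at
`s = 0` says `γ² (u(0)⁻² - 1) ≤ 1` and the claim at `s = t` says `γ² e^{2ct} (u(t)⁻² - 1) ≤ 1`.
-/

open Real Set

lemma div_sqrt_one_add_sq_le_iff {x a : ℝ} (hx : 0 ≤ x) (ha : 0 < a) :
    x / √(1 + x ^ 2) ≤ a ↔ x ^ 2 * ((a ^ 2)⁻¹ - 1) ≤ 1 := by
  have hsqrt : 0 < √(1 + x ^ 2) := sqrt_pos.2 (by positivity)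
  calc x / √(1 + x ^ 2) ≤ a
      ↔ x ^ 2 ≤ (a * √(1 + x ^ 2)) ^ 2 := by
        rw [div_le_iff₀ hsqrt, pow_le_pow_iff_left₀ hx (by positivity) two_ne_zero]
    _ ↔ x ^ 2 * ((a ^ 2)⁻¹ - 1) ≤ 1 := by
        have hrw : x ^ 2 * ((a ^ 2)⁻¹ - 1) = (x ^ 2 - a ^ 2 * x ^ 2) / a ^ 2 := by
          field_simp
        rw [mul_pow, sq_sqrt (by positivity), hrw, div_le_one (by positivity)]
        constructor <;> intro <;> linarith

lemma hasDerivAt_exp_mul_inv_sq_sub_one {u : ℝ → ℝ} {u' c s : ℝ} (hu : HasDerivAt u u' s)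
    (hs : u s ≠ 0) :
    HasDerivAt (fun r ↦ exp (2 * c * r) * ((u r ^ 2)⁻¹ - 1))
      (2 * exp (2 * c * s) / u s ^ 3 * (c * u s * (1 - u s ^ 2) - u')) s := by
  have hexp : HasDerivAt (fun r ↦ exp (2 * c * r)) (exp (2 * c * s) * (2 * c)) s := by
    simpa using ((hasDerivAt_id s).const_mul (2 * c)).exp
  have hinv : HasDerivAt (fun r ↦ (u r ^ 2)⁻¹ - 1) (-(2 * u s * u') / (u s ^ 2) ^ 2) s := by
    simpa using ((hu.fun_pow 2).inv (pow_ne_zero 2 hs)).sub_const 1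
  refine (hexp.fun_mul hinv).congr_deriv ?_
  field_simp
  ring

lemma antitoneOn_exp_mul_inv_sq_sub_one {u u' : ℝ → ℝ} {c : ℝ} {D : Set ℝ} (hD : Convex ℝ D)
    (hderiv : ∀ t ∈ D, HasDerivAt u (u' t) t) (hpos : ∀ t ∈ D, 0 < u t)
    (hsuper : ∀ t ∈ D, c * u t * (1 - u t ^ 2) ≤ u' t) :
    AntitoneOn (fun r ↦ exp (2 * c * r) * ((u r ^ 2)⁻¹ - 1)) D := by
  have hH t (ht : t ∈ D) :=
    hasDerivAt_exp_mul_inv_sq_sub_one (c := c) (hderiv t ht) (hpos t ht).ne'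
  refine antitoneOn_of_hasDerivWithinAt_nonpos hD
    (fun t ht ↦ (hH t ht).continuousAt.continuousWithinAt)
    (fun t ht ↦ (hH t (interior_subset ht)).hasDerivWithinAt) fun t ht ↦ ?_
  have ht' := interior_subset ht
  have hut := hpos t ht'
  exact mul_nonpos_of_nonneg_of_nonpos (by positivity) (sub_nonpos.2 (hsuper t ht'))

theorem stmt1_general (c γ T : ℝ) (hγ : 0 < γ) (u u' : ℝ → ℝ)
    (hderiv : ∀ t ∈ Set.Ico (0 : ℝ) T, HasDerivAt u (u' t) t)
    (hrange : ∀ t ∈ Set.Ico (0 : ℝ) T, 0 < u t ∧ u t ≤ 1)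
    (hcomp : ∀ t ∈ Set.Ico (0 : ℝ) T, 0 < u t → u t ≤ 1 →
      c * u t * (1 - (u t) ^ 2) ≤ u' t)
    (hu0 : γ / Real.sqrt (1 + γ ^ 2) ≤ u 0) :
    ∀ t ∈ Set.Ico (0 : ℝ) T,
      γ * Real.exp (c * t) / Real.sqrt (1 + γ ^ 2 * Real.exp (2 * c * t)) ≤ u t := by
  intro t ht
  have h0 : (0 : ℝ) ∈ Ico 0 T := ⟨le_rfl, ht.1.trans_lt ht.2⟩
  have hanti := antitoneOn_exp_mul_inv_sq_sub_one (convex_Ico 0 T) hderiv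
    (fun s hs ↦ (hrange s hs).1) fun s hs ↦ hcomp s hs (hrange s hs).1 (hrange s hs).2
  have hinit := (div_sqrt_one_add_sq_le_iff hγ.le (hrange 0 h0).1).1 hu0
  have hsq : (γ * exp (c * t)) ^ 2 = γ ^ 2 * exp (2 * c * t) := by
    rw [mul_pow, ← exp_nat_mul]
    ring_nf
  rw [← hsq, div_sqrt_one_add_sq_le_iff (by positivity) (hrange t ht).1, hsq, mul_assoc]
  calc γ ^ 2 * (exp (2 * c * t) * ((u t ^ 2)⁻¹ - 1))
      ≤ γ ^ 2 * (exp (2 * c * 0) * ((u 0 ^ 2)⁻¹ - 1)) :=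
        mul_le_mul_of_nonneg_left (hanti h0 ht ht.1) (by positivity)
    _ ≤ 1 := by simpa using hinit

/-- ODE comparison lemma for u' ≥ c·u·(1-u²). -/
theorem stmt1 (c γ T : ℝ) (hc : 0 < c) (hγ : 0 < γ) (u u' : ℝ → ℝ)
    (hderiv : ∀ t ∈ Set.Ico (0 : ℝ) T, HasDerivAt u (u' t) t)
    (hrange : ∀ t ∈ Set.Ico (0 : ℝ) T, 0 < u t ∧ u t ≤ 1)
    (hcomp : ∀ t ∈ Set.Ico (0 : ℝ) T, 0 < u t → u t ≤ 1 →
      c * u t * (1 - (u t) ^ 2) ≤ u' t)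
    (hu0 : γ / Real.sqrt (1 + γ ^ 2) ≤ u 0) :
    ∀ t ∈ Set.Ico (0 : ℝ) T,
      γ * Real.exp (c * t) / Real.sqrt (1 + γ ^ 2 * Real.exp (2 * c * t)) ≤ u t :=
  stmt1_general c γ T hγ u u' hderiv hrange hcomp hu0
end

section
/- Let h : Fin 2 → Fin 2 → Fin 2 → ℝ be fully symmetric in all three indices. Define |A|² = ∑_{k,i,j} (h k i j)² and |H|² = ∑_k (∑_i h k i i)². Then |H|² ≤ (4/3)·|A|². -/
/-- |H|² ≤ (4/3)|A|² for a fully symmetric second fundamental form. -/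
theorem stmt3 (h : Fin 2 → Fin 2 → Fin 2 → ℝ)
    (hsymm : ∀ k i j, h k i j = h i k j ∧ h k i j = h k j i) :
    ∑ k : Fin 2, (∑ i : Fin 2, h k i i) ^ 2 ≤
      (4 / 3) * ∑ k : Fin 2, ∑ i : Fin 2, ∑ j : Fin 2, (h k i j) ^ 2 := by
  have h1 := (hsymm 0 0 1).2
  have h2 := (hsymm 0 1 0).1
  have h3 := (hsymm 0 1 1).1
  have h4 := (hsymm 1 0 1).2
  simp [Fin.sum_univ_two] at *
  rw [h1, h2, h3, h4]
  nlinarith [sq_nonneg (h 0 0 0 - 3 * h 1 1 0), sq_nonneg (3 * h 1 0 0 - h 1 1 1)]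
end
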